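/- Let (S,𝓜) be a measurable space and let N_X be a lattice quasi-norm on measurable functions S → ℝ with quasi-triangle constant κ_X: that is, N_X assigns to each measurable h : S → ℝ a value in [0,∞] with N_X(λ·h) = |λ|·N_X(h), N_X(h₁+h₂) ≤ κ_X·(N_X(h₁)+N_X(h₂)), and N_X(h) ≤ N_X(h′) whenever |h(s)| ≤ |h′(s)| for all s. Let Y be a real vector space with quasi-norm ‖·‖_Y of quasi-triangle constant κ_Y, let n ≥ 1, let f_1,…,f_n : S → ℝ be measurable with N_X(f_i) < ∞, let g = (g_1,…,g_n) ∈ Y^n, and let 0 < c₁ ≤ c₂. Let A be a positive semidefinite n×n matrix with c₁·|A e| ≤ N_X(∑_{i=1}^n e_i·f_i) ≤ c₂·|A e| for all e ∈ ℝ^n, and let B be a reducing matrix (with constants c₁, c₂) for g with respect to ‖·‖_Y. Then there are constants 0 < c ≤ C depending only on n, c₁, c₂, κ_X, κ_Y such that c·‖A·B‖_op ≤ N_X( s ↦ ‖∑_{i=1}^n f_i(s) • g_i‖_Y ) ≤ C·‖A·B‖_op. -/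

import Mathlib

open scoped TensorProduct

universe u v

/-- The Euclidean norm on `Fin k → ℝ`. -/
noncomputable def euclNorm {k : ℕ} (x : Fin k → ℝ) : ℝ := Real.sqrt (∑ i, x i ^ 2)

/-- The operator norm of an `n × n` real matrix with respect to the Euclidean norm. -/
noncomputable def opNorm {n : ℕ} (M : Matrix (Fin n) (Fin n) ℝ) : ℝ :=
  ‖Matrix.toEuclideanCLM (𝕜 := ℝ) M‖

lemma euclNorm_eq {k : ℕ} (x : Fin k → ℝ) :
    euclNorm x = ‖(WithLp.equiv 2 (Fin k → ℝ)).symm x‖ := by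
  rw [EuclideanSpace.norm_eq]
  simp [euclNorm, Real.norm_eq_abs, sq_abs]

lemma euclNorm_nonneg {k : ℕ} (x : Fin k → ℝ) : 0 ≤ euclNorm x := Real.sqrt_nonneg _

lemma euclNorm_smul {k : ℕ} (c : ℝ) (x : Fin k → ℝ) :
    euclNorm (fun i => c * x i) = |c| * euclNorm x := by
  simp [euclNorm, mul_pow, ← Finset.mul_sum, Real.sqrt_mul (sq_nonneg c),
    Real.sqrt_sq_eq_abs]

lemma euclNorm_mulVec_le {n : ℕ} (M : Matrix (Fin n) (Fin n) ℝ) (x : Fin n → ℝ) :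
    euclNorm (M.mulVec x) ≤ opNorm M * euclNorm x := by
  rw [euclNorm_eq, euclNorm_eq, WithLp.equiv_symm_apply, ← Matrix.toEuclideanCLM_toLp]
  exact (Matrix.toEuclideanCLM (𝕜 := ℝ) M).le_opNorm _

lemma exists_unit_opNorm {n : ℕ} (hn : 1 ≤ n) (M : Matrix (Fin n) (Fin n) ℝ) :
    ∃ e : Fin n → ℝ, euclNorm e = 1 ∧ opNorm M ≤ euclNorm (M.mulVec e) := by
  set T := Matrix.toEuclideanCLM (𝕜 := ℝ) M
  have hne : (Metric.sphere (0 : EuclideanSpace ℝ (Fin n)) 1).Nonempty := by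
    refine ⟨EuclideanSpace.single ⟨0, hn⟩ (1:ℝ), ?_⟩
    simp [mem_sphere_iff_norm, EuclideanSpace.norm_single]
  obtain ⟨x, hx, hmax⟩ := (isCompact_sphere (0 : EuclideanSpace ℝ (Fin n)) 1).exists_isMaxOn
    hne ((continuous_norm.comp T.continuous).continuousOn)
  have hx1 : ‖x‖ = 1 := by simpa [mem_sphere_iff_norm] using hx
  have hTle : ‖T‖ ≤ ‖T x‖ := by
    refine T.opNorm_le_bound (norm_nonneg _) fun y => ?_
    rcases eq_or_ne y 0 with rfl | hy
    · simp
    · have hy' : ‖y‖ ≠ 0 := norm_ne_zero_iff.mpr hy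
      have hu : (‖y‖⁻¹ • y) ∈ Metric.sphere (0 : EuclideanSpace ℝ (Fin n)) 1 := by
        simp [mem_sphere_iff_norm, norm_smul, abs_of_pos (norm_pos_iff.mpr hy), inv_mul_cancel₀ hy']
      have h1 : ‖T (‖y‖⁻¹ • y)‖ ≤ ‖T x‖ := hmax hu
      have h2 : ‖T (‖y‖⁻¹ • y)‖ = ‖y‖⁻¹ * ‖T y‖ := by
        rw [_root_.map_smul, norm_smul]
        simp [abs_of_nonneg (norm_nonneg y)]
      rw [h2] at h1
      calc ‖T y‖ = ‖y‖ * (‖y‖⁻¹ * ‖T y‖) := by field_simp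
        _ ≤ ‖y‖ * ‖T x‖ := by
            exact mul_le_mul_of_nonneg_left h1 (norm_nonneg _)
        _ = ‖T x‖ * ‖y‖ := mul_comm _ _
  refine ⟨WithLp.equiv 2 (Fin n → ℝ) x, ?_, ?_⟩
  · rw [euclNorm_eq]; simpa using hx1
  · rw [euclNorm_eq, WithLp.equiv_symm_apply, ← Matrix.toEuclideanCLM_toLp]
    exact hTle

lemma euclNorm_le_sum_abs {k : ℕ} (x : Fin k → ℝ) : euclNorm x ≤ ∑ i, |x i| := by
  have h : ∑ i, x i ^ 2 ≤ (∑ i, |x i|) ^ 2 := by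
    rw [sq, Finset.sum_mul_sum]
    calc ∑ i, x i ^ 2 = ∑ i, |x i| * |x i| := by
          simp [sq_abs, sq]
      _ ≤ ∑ i, ∑ j, |x i| * |x j| := by
          refine Finset.sum_le_sum fun i _ => ?_
          exact Finset.single_le_sum (f := fun j => |x i| * |x j|)
            (fun j _ => mul_nonneg (abs_nonneg _) (abs_nonneg _)) (Finset.mem_univ i)
  calc euclNorm x ≤ Real.sqrt ((∑ i, |x i|) ^ 2) := Real.sqrt_le_sqrt h
    _ = ∑ i, |x i| := Real.sqrt_sq (Finset.sum_nonneg fun i _ => abs_nonneg _)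

lemma abs_sum_mul_le {k : ℕ} (u v : Fin k → ℝ) :
    |∑ i, u i * v i| ≤ euclNorm u * euclNorm v := by
  have := abs_real_inner_le_norm ((WithLp.equiv 2 (Fin k → ℝ)).symm u)
    ((WithLp.equiv 2 (Fin k → ℝ)).symm v)
  rw [euclNorm_eq, euclNorm_eq]
  simpa [PiLp.inner_apply, RCLike.inner_apply, mul_comm] using this

/-- A quasi-norm on a real vector space `Z` with quasi-triangle constant `κ`. -/
def IsQuasiNorm {Z : Type*} [AddCommGroup Z] [Module ℝ Z] (N : Z → ℝ) (κ : ℝ) : Prop :=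
  (∀ z, 0 ≤ N z) ∧ (∀ (l : ℝ) (z : Z), N (l • z) = |l| * N z) ∧
    ∀ z w, N (z + w) ≤ κ * (N z + N w)

/-- `A` is a reducing matrix for the tuple `f` with respect to `N` (with constants
`c₁ ≤ c₂`): `A` is positive semidefinite and `c₁|Ae| ≤ N(∑ eᵢ • fᵢ) ≤ c₂|Ae|`. -/
def IsReducing {X : Type*} [AddCommGroup X] [Module ℝ X] (N : X → ℝ)
    {n : ℕ} (f : Fin n → X) (c₁ c₂ : ℝ) (A : Matrix (Fin n) (Fin n) ℝ) : Prop :=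
  A.PosSemidef ∧ ∀ e : Fin n → ℝ,
    c₁ * euclNorm (A.mulVec e) ≤ N (∑ i, e i • f i) ∧
      N (∑ i, e i • f i) ≤ c₂ * euclNorm (A.mulVec e)

open MeasureTheory ENNReal

/-- A lattice quasi-norm (with quasi-triangle constant `κ`) on measurable real functions on
`S`, with values in `[0,∞]`: absolutely homogeneous, `κ`-quasi-subadditive, and monotone
under pointwise domination of absolute values. -/
def IsLatticeQuasiNorm {S : Type*} [MeasurableSpace S]
    (N : (S → ℝ) → ℝ≥0∞) (κ : ℝ) : Prop :=
  (∀ (l : ℝ) (h : S → ℝ), Measurable h →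
      N (fun s => l * h s) = ENNReal.ofReal |l| * N h) ∧
  (∀ h₁ h₂ : S → ℝ, Measurable h₁ → Measurable h₂ →
      N (fun s => h₁ s + h₂ s) ≤ ENNReal.ofReal κ * (N h₁ + N h₂)) ∧
  (∀ h h' : S → ℝ, (∀ s, |h s| ≤ |h' s|) → N h ≤ N h')

lemma lqn_zero {S : Type*} [MeasurableSpace S] {N : (S → ℝ) → ℝ≥0∞} {κ : ℝ}
    (hN : IsLatticeQuasiNorm N κ) : N (fun _ => 0) = 0 := by
  have := hN.1 0 (fun _ => (0:ℝ)) measurable_const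
  simpa using this

lemma lqn_sum {S : Type*} [MeasurableSpace S] {N : (S → ℝ) → ℝ≥0∞} {κ : ℝ}
    (hN : IsLatticeQuasiNorm N κ) (hκ : 1 ≤ κ) {m : ℕ} (F : Fin m → S → ℝ)
    (hF : ∀ j, Measurable (F j)) (t : Finset (Fin m)) :
    N (fun s => ∑ j ∈ t, F j s) ≤ ENNReal.ofReal (κ ^ t.card) * ∑ j ∈ t, N (F j) := by
  classical
  induction t using Finset.cons_induction with
  | empty => simpa using le_of_eq (lqn_zero hN)
  | cons a s ha ih =>
    have hκ0 : (0:ℝ) ≤ κ := le_trans zero_le_one hκ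
    have hmeas : Measurable (fun x => ∑ j ∈ s, F j x) :=
      Finset.measurable_sum _ fun j _ => hF j
    simp only [Finset.sum_cons, Finset.card_cons]
    calc N (fun x => F a x + ∑ j ∈ s, F j x)
        ≤ ENNReal.ofReal κ * (N (F a) + N (fun x => ∑ j ∈ s, F j x)) :=
          hN.2.1 _ _ (hF a) hmeas
      _ ≤ ENNReal.ofReal κ * (N (F a) + ENNReal.ofReal (κ ^ s.card) * ∑ j ∈ s, N (F j)) := by
          gcongr
      _ = ENNReal.ofReal κ * N (F a)
            + ENNReal.ofReal (κ ^ (s.card + 1)) * ∑ j ∈ s, N (F j) := by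
          rw [mul_add, ← mul_assoc, ← ENNReal.ofReal_mul hκ0, ← pow_succ']
      _ ≤ ENNReal.ofReal (κ ^ (s.card + 1)) * N (F a)
            + ENNReal.ofReal (κ ^ (s.card + 1)) * ∑ j ∈ s, N (F j) := by
          gcongr
          exact le_self_pow₀ hκ (Nat.succ_ne_zero _)
      _ = ENNReal.ofReal (κ ^ (s.card + 1)) * (N (F a) + ∑ j ∈ s, N (F j)) := by
          rw [mul_add]

/-- **`‖A·B‖_op` is comparable to the lattice-valued norm `N_X(s ↦ ‖∑ fᵢ(s) • gᵢ‖_Y)`**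
(Proposition 3.5), when `X` is a quasi-normed function lattice. -/
theorem stmt12 (n : ℕ) (hn : 1 ≤ n) (c₁ c₂ κX κY : ℝ) (hc₁ : 0 < c₁) (hc₁₂ : c₁ ≤ c₂)
    (hκX : 1 ≤ κX) (hκY : 1 ≤ κY) :
    ∃ c C : ℝ, 0 < c ∧ c ≤ C ∧
      ∀ (S : Type u) [MeasurableSpace S] (NX : (S → ℝ) → ℝ≥0∞),
        IsLatticeQuasiNorm NX κX →
        ∀ (Y : Type v) [AddCommGroup Y] [Module ℝ Y] (NY : Y → ℝ), IsQuasiNorm NY κY →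
        ∀ f : Fin n → S → ℝ, (∀ i, Measurable (f i)) → (∀ i, NX (f i) < ⊤) →
        ∀ (g : Fin n → Y) (A B : Matrix (Fin n) (Fin n) ℝ),
          A.PosSemidef →
          (∀ e : Fin n → ℝ,
            ENNReal.ofReal (c₁ * euclNorm (A.mulVec e)) ≤ NX (fun s => ∑ i, e i * f i s) ∧
              NX (fun s => ∑ i, e i * f i s) ≤ ENNReal.ofReal (c₂ * euclNorm (A.mulVec e))) →
          IsReducing NY g c₁ c₂ B →
          ENNReal.ofReal (c * opNorm (A * B)) ≤ NX (fun s => NY (∑ i, f i s • g i)) ∧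
            NX (fun s => NY (∑ i, f i s • g i)) ≤ ENNReal.ofReal (C * opNorm (A * B)) := by
  have hc₂ : 0 < c₂ := lt_of_lt_of_le hc₁ hc₁₂
  have hκX0 : (0:ℝ) ≤ κX := le_trans zero_le_one hκX
  have h1n : (1:ℝ) ≤ (n:ℝ) := by exact_mod_cast hn
  have hκXn : (1:ℝ) ≤ κX ^ n := one_le_pow₀ hκX
  refine ⟨c₁^2, n * c₂^2 * κX^n, by positivity, ?_, ?_⟩
  · have h4 : (1:ℝ) ≤ (n:ℝ) * κX^n := by nlinarith
    calc c₁^2 ≤ c₂^2 := by nlinarith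
      _ = 1 * c₂^2 := (one_mul _).symm
      _ ≤ ((n:ℝ) * κX^n) * c₂^2 := mul_le_mul_of_nonneg_right h4 (sq_nonneg c₂)
      _ = ↑n * c₂^2 * κX^n := by ring
  intro S _ NX hNX Y _ _ NY hNY f hf _ g A B _ hA2 hB
  obtain ⟨hBpsd, hBred⟩ := hB
  have hsym : ∀ i j, B i j = B j i := fun i j => by
    have := hBpsd.1.apply j i
    simpa using this
  set φ : S → ℝ := fun s => NY (∑ i, f i s • g i) with hφ
  have hφ0 : ∀ s, 0 ≤ φ s := fun s => hNY.1 _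
  constructor
  · -- lower bound
    obtain ⟨e₀, he₀, hop⟩ := exists_unit_opNorm hn (A * B)
    set w : Fin n → ℝ := B.mulVec e₀ with hw
    have key := (hA2 (fun i => c₁ * w i)).1
    have hAe : A.mulVec (fun i => c₁ * w i) = fun k => c₁ * A.mulVec w k := by
      have : (fun i => c₁ * w i) = c₁ • w := by funext i; simp
      rw [this, Matrix.mulVec_smul]
      rfl
    have hnorm : euclNorm (A.mulVec (fun i => c₁ * w i))
        = c₁ * euclNorm ((A * B).mulVec e₀) := by
      rw [hAe, euclNorm_smul, abs_of_pos hc₁, hw, Matrix.mulVec_mulVec]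
    -- pointwise domination
    have hpt : ∀ s, |∑ i, (c₁ * w i) * f i s| ≤ |φ s| := by
      intro s
      have hswap : ∑ i, w i * f i s = ∑ j, e₀ j * B.mulVec (fun i => f i s) j := by
        simp only [hw, Matrix.mulVec, dotProduct, Finset.sum_mul, Finset.mul_sum]
        rw [Finset.sum_comm]
        exact Finset.sum_congr rfl fun j _ => Finset.sum_congr rfl fun i _ => by
          rw [hsym i j]; ring
      have hcs : |∑ i, w i * f i s| ≤ euclNorm (B.mulVec (fun i => f i s)) := by
        rw [hswap]
        have := abs_sum_mul_le e₀ (B.mulVec (fun i => f i s))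
        rw [he₀, one_mul] at this
        exact this
      have hred := (hBred (fun i => f i s)).1
      have h2 : |∑ i, (c₁ * w i) * f i s| = c₁ * |∑ i, w i * f i s| := by
        have he : ∑ i, (c₁ * w i) * f i s = c₁ * ∑ i, w i * f i s := by
          rw [Finset.mul_sum]
          exact Finset.sum_congr rfl fun i _ => by ring
        rw [he, abs_mul, abs_of_pos hc₁]
      rw [h2, abs_of_nonneg (hφ0 s)]
      calc c₁ * |∑ i, w i * f i s| ≤ c₁ * euclNorm (B.mulVec (fun i => f i s)) := by
            exact mul_le_mul_of_nonneg_left hcs hc₁.le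
        _ ≤ φ s := hred
    have hmono : NX (fun s => ∑ i, (c₁ * w i) * f i s) ≤ NX φ := hNX.2.2 _ _ hpt
    refine le_trans ?_ (le_trans key hmono)
    apply ENNReal.ofReal_le_ofReal
    rw [hnorm]
    nlinarith [hop, euclNorm_nonneg ((A * B).mulVec e₀)]
  · -- upper bound
    set h : Fin n → S → ℝ := fun j s => ∑ i, B j i * f i s with hh
    have hmeas : ∀ j, Measurable (h j) :=
      fun j => Finset.measurable_sum _ fun i _ => (hf i).const_mul _
    have hmeasabs : Measurable (fun s => ∑ j, |h j s|) :=
      Finset.measurable_sum _ fun j _ => (hmeas j).abs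
    have hpt : ∀ s, |φ s| ≤ abs (c₂ * ∑ j, |h j s|) := by
      intro s
      have hBv : B.mulVec (fun i => f i s) = fun j => h j s := by
        funext j; simp [hh, Matrix.mulVec, dotProduct]
      have hred := (hBred (fun i => f i s)).2
      rw [hBv] at hred
      have hle : euclNorm (fun j => h j s) ≤ ∑ j, |h j s| := euclNorm_le_sum_abs _
      rw [abs_of_nonneg (hφ0 s), abs_of_nonneg
        (mul_nonneg hc₂.le (Finset.sum_nonneg fun j _ => abs_nonneg _))]
      calc φ s ≤ c₂ * euclNorm (fun j => h j s) := hred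
        _ ≤ c₂ * ∑ j, |h j s| := mul_le_mul_of_nonneg_left hle hc₂.le
    have step1 : NX φ ≤ NX (fun s => c₂ * ∑ j, |h j s|) := hNX.2.2 _ _ hpt
    have step2 : NX (fun s => c₂ * ∑ j, |h j s|)
        = ENNReal.ofReal c₂ * NX (fun s => ∑ j, |h j s|) := by
      rw [hNX.1 c₂ _ hmeasabs, abs_of_pos hc₂]
    have step3 : NX (fun s => ∑ j, |h j s|)
        ≤ ENNReal.ofReal (κX ^ n) * ∑ j, NX (fun s => |h j s|) := by
      have := lqn_sum hNX hκX (fun j s => |h j s|) (fun j => (hmeas j).abs) Finset.univ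
      simpa using this
    have step4 : ∀ j, NX (fun s => |h j s|) ≤ ENNReal.ofReal (c₂ * opNorm (A * B)) := by
      intro j
      have habs : NX (fun s => |h j s|) ≤ NX (h j) :=
        hNX.2.2 _ _ fun s => by rw [abs_abs]
      have hred := (hA2 (fun i => B j i)).2
      have hcol : A.mulVec (fun i => B j i) = (A * B).mulVec (Pi.single j 1) := by
        rw [Matrix.mulVec_single_one]
        funext k
        simp only [Matrix.mulVec, dotProduct, Matrix.col_apply, Matrix.mul_apply, mul_one]
        exact Finset.sum_congr rfl fun i _ => by rw [hsym j i]
      have hcolle : euclNorm ((A * B).mulVec (Pi.single j 1)) ≤ opNorm (A * B) := by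
        have := euclNorm_mulVec_le (A * B) (Pi.single j 1)
        have hone : euclNorm (Pi.single j (1:ℝ)) = 1 := by
          have hfun : (fun i => (Pi.single j (1:ℝ)) i ^ 2)
              = fun i => if i = j then (1:ℝ) else 0 := by
            funext i
            rcases eq_or_ne i j with rfl | hne
            · simp
            · simp [Pi.single_eq_of_ne hne, hne]
          rw [euclNorm]
          rw [show (∑ i, (Pi.single j (1:ℝ)) i ^ 2) = ∑ i, if i = j then (1:ℝ) else 0 from by
            rw [hfun]]
          simp
        rw [hone, mul_one] at this
        exact this
      calc NX (fun s => |h j s|) ≤ NX (h j) := habs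
        _ ≤ ENNReal.ofReal (c₂ * euclNorm (A.mulVec (fun i => B j i))) := hred
        _ ≤ ENNReal.ofReal (c₂ * opNorm (A * B)) := by
            apply ENNReal.ofReal_le_ofReal
            rw [hcol]
            exact mul_le_mul_of_nonneg_left hcolle hc₂.le
    have step5 : ∑ j, NX (fun s => |h j s|) ≤ (n : ℝ≥0∞) * ENNReal.ofReal (c₂ * opNorm (A * B)) := by
      calc ∑ j : Fin n, NX (fun s => |h j s|)
          ≤ ∑ _j : Fin n, ENNReal.ofReal (c₂ * opNorm (A * B)) :=
            Finset.sum_le_sum fun j _ => step4 j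
        _ = (n : ℝ≥0∞) * ENNReal.ofReal (c₂ * opNorm (A * B)) := by
            simp [Finset.sum_const, nsmul_eq_mul]
    have hopn : 0 ≤ opNorm (A * B) := norm_nonneg _
    calc NX φ ≤ ENNReal.ofReal c₂ * (ENNReal.ofReal (κX ^ n)
          * ((n : ℝ≥0∞) * ENNReal.ofReal (c₂ * opNorm (A * B)))) := by
          refine le_trans step1 (le_trans (le_of_eq step2) ?_)
          exact mul_le_mul_right (le_trans step3 (mul_le_mul_right step5 _)) _
      _ = ENNReal.ofReal (↑n * c₂ ^ 2 * κX ^ n * opNorm (A * B)) := by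
          rw [← ENNReal.ofReal_natCast n, ← ENNReal.ofReal_mul (by positivity),
            ← ENNReal.ofReal_mul (by positivity), ← ENNReal.ofReal_mul hc₂.le]
          congr 1
          ring
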